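/- For all indices 1 ≤ k < j ≤ n, the following product formula holds: Φ_{kj} Ψ_{kj} q^{y_j − y_k + 1} ([l][l+1])^{j−k} = −[l][l+1] ξ(y_j − y_k) · ∏_{i=k+1}^{j−1} (1 − [l][l+1] ξ(y_j − y_i)). -/

import Mathlib

lemma rpow_ne_one' {q x : ℝ} (hq : 0 < q) (hq1 : q ≠ 1) (hx : x ≠ 0) : q ^ x ≠ 1 := by
  intro h
  have hlog : x * Real.log q = 0 := by
    rw [← Real.log_rpow hq, h, Real.log_one]
  have hlq : Real.log q ≠ 0 := by
    intro h0
    rcases Real.log_eq_zero.mp h0 with h' | h' | h' <;> first | exact hq1 h' | linarith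
  rcases mul_eq_zero.mp hlog with h' | h'
  · exact hx h'
  · exact hlq h'

lemma sub_inv_ne_zero' {u : ℝ} (hu : 0 < u) (h1 : u ≠ 1) : u - u⁻¹ ≠ 0 := by
  intro h
  have hu0 : u ≠ 0 := ne_of_gt hu
  have h3 := sub_eq_zero.mp h
  have h2 : u * u = 1 := by
    calc u * u = u * u⁻¹ := by rw [← h3]
    _ = 1 := mul_inv_cancel₀ hu0
  have h4 : (u - 1) * (u + 1) = 0 := by linear_combination h2
  rcases mul_eq_zero.mp h4 with h' | h'
  · exact h1 (by linarith)
  · linarith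

lemma sq_sub_one_ne_zero' {u : ℝ} (hu : 0 < u) (h1 : u ≠ 1) : u * u - 1 ≠ 0 := by
  intro h
  have h4 : (u - 1) * (u + 1) = 0 := by linear_combination h
  rcases mul_eq_zero.mp h4 with h' | h'
  · exact h1 (by linarith)
  · linarith

set_option maxHeartbeats 2000000 in
lemma key_identity (q u a b p : ℝ) (hq0 : q ≠ 0) (hu0 : u ≠ 0) (ha : a ≠ 0) (hb : b ≠ 0)
    (hqq : q - q⁻¹ ≠ 0) (hv : u - u⁻¹ ≠ 0) (hw : u*q - (u*q)⁻¹ ≠ 0)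
    (ha0 : a - 1 ≠ 0) (ha2 : a*(q*q) - 1 ≠ 0) (hb0 : b - 1 ≠ 0) (hb2 : b*(q*q) - 1 ≠ 0)
    (hqm1 : q*q - 1 ≠ 0) (hum1 : u*u - 1 ≠ 0) (hw2 : u*q*(u*q) - 1 ≠ 0) :
    (-(((u - u⁻¹)/(q-q⁻¹)) * ((u*q - (u*q)⁻¹)/(q-q⁻¹))) *
        ((q - q⁻¹)^2 * (b*q) / ((b-1)*(b*(q*q)-1))) * p) *
      ((((u*q - (u*q)⁻¹)/(q-q⁻¹)) * u⁻¹)⁻¹ * (b*(q*q) - (u*u)⁻¹) / (a*(q*q) - 1) *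
        (u⁻¹ * (((u - u⁻¹)/(q-q⁻¹)))⁻¹ * (b - u*u) / (a - 1)) *
        (a*q) * (((u - u⁻¹)/(q-q⁻¹)) * ((u*q - (u*q)⁻¹)/(q-q⁻¹)))) =
      -(((u - u⁻¹)/(q-q⁻¹)) * ((u*q - (u*q)⁻¹)/(q-q⁻¹))) *
        ((q - q⁻¹)^2 * (a*q) / ((a-1)*(a*(q*q)-1))) *
        ((1 - ((u - u⁻¹)/(q-q⁻¹)) * ((u*q - (u*q)⁻¹)/(q-q⁻¹)) *
            ((q - q⁻¹)^2 * (b*q) / ((b-1)*(b*(q*q)-1)))) * p) * (b*q) := by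
  have hq2 : q^2 - 1 ≠ 0 := by rw [sq]; exact hqm1
  have hu2 : u^2 - 1 ≠ 0 := by rw [sq]; exact hum1
  have ha3 : a*q^2 - 1 ≠ 0 := by rw [sq]; exact ha2
  have hb3 : b*q^2 - 1 ≠ 0 := by rw [sq]; exact hb2
  have hw3 : u^2*q^2 - 1 ≠ 0 := by intro h; exact hw2 (by linear_combination h)
  have hb4 : -1 + q^2*b ≠ 0 := by intro h; exact hb3 (by linear_combination h)
  have ha4 : -1 + q^2*a ≠ 0 := by intro h; exact ha3 (by linear_combination h)
  have hab : 1 - q ^ 2 * b - q ^ 2 * a + q ^ 4 * b * a ≠ 0 := by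
    have := mul_ne_zero hb4 ha4; intro h; exact this (by linear_combination h)
  field_simp
  ring_nf
  field_simp
  ring

/-- The symmetric q-integer `[m] = (q^m - q^{-m})/(q - q⁻¹)` (real powers). -/
noncomputable def qint (q : ℝ) (m : ℤ) : ℝ :=
  (q ^ (m : ℝ) - q ^ (-(m : ℝ))) / (q - q⁻¹)

/-- `ξ(y) = (q - q⁻¹)² q^{y+1} / ((q^y - 1)(q^{y+2} - 1))`. -/
noncomputable def xi (q y : ℝ) : ℝ :=
  (q - q⁻¹) ^ 2 * q ^ (y + 1) / ((q ^ y - 1) * (q ^ (y + 2) - 1))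

/-- The coefficients `Φ_{ij}` defined by the downward recursion
`Φ_{j-1,j} = (q - q⁻¹)/(q^{y_j - y_{j-1} + 2} - 1)` and
`Φ_{ij} = Φ_{i+1,j} · q_l⁻¹ · (q^{y_j - y_{i+1} + 2} - q^{-2l})/(q^{y_j - y_i + 2} - 1)`. -/
noncomputable def Phi (q ql : ℝ) (l : ℕ) (y : ℕ → ℝ) (i j : ℕ) : ℝ :=
  if i + 1 < j then
    Phi q ql l y (i + 1) j * ql⁻¹ *
      (q ^ (y j - y (i + 1) + 2) - q ^ (-(2 * (l : ℝ)))) / (q ^ (y j - y i + 2) - 1)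
  else (q - q⁻¹) / (q ^ (y j - y i + 2) - 1)
termination_by j - i
decreasing_by omega

/-- The coefficients `Ψ_{ij}` defined by the downward recursion
`Ψ_{j-1,j} = (q - q⁻¹)/(1 - q^{y_j - y_{j-1}})` and
`Ψ_{ij} = q^{-l}[l]⁻¹ · (q^{y_j - y_{i+1}} - q^{2l})/(q^{y_j - y_i} - 1) · Ψ_{i+1,j}`. -/
noncomputable def Psi (q : ℝ) (l : ℕ) (y : ℕ → ℝ) (i j : ℕ) : ℝ :=
  if i + 1 < j then
    q ^ (-(l : ℝ)) * (qint q l)⁻¹ *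
      (q ^ (y j - y (i + 1)) - q ^ (2 * (l : ℝ))) / (q ^ (y j - y i) - 1) *
      Psi q l y (i + 1) j
  else (q - q⁻¹) / (1 - q ^ (y j - y i))
termination_by j - i
decreasing_by omega

set_option maxHeartbeats 1000000 in
/-- the product formula
`Φ_{kj} Ψ_{kj} q^{y_j - y_k + 1} ([l][l+1])^{j-k}
   = -[l][l+1] ξ(y_j - y_k) ∏_{k<i<j} (1 - [l][l+1] ξ(y_j - y_i))`. -/
theorem Phi_Psi_product_formula (q : ℝ) (hq : 0 < q) (hq1 : q ≠ 1)
    (l : ℕ) (hl : 0 < l) (n : ℕ) (hn : 2 ≤ n) (y : ℕ → ℝ)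
    (hy : ∀ i j, 1 ≤ i → i ≤ n → 1 ≤ j → j ≤ n → i ≠ j →
      y j - y i ≠ 0 ∧ y j - y i ≠ -2)
    (ql : ℝ) (hql : ql = qint q (l + 1) * q ^ (-(l : ℝ)))
    (k j : ℕ) (hk : 1 ≤ k) (hkj : k < j) (hj : j ≤ n) :
    Phi q ql l y k j * Psi q l y k j * q ^ (y j - y k + 1) *
        (qint q l * qint q (l + 1)) ^ (j - k) =
      -(qint q l * qint q (l + 1)) * xi q (y j - y k) *
        ∏ i ∈ Finset.Ioo k j, (1 - qint q l * qint q (l + 1) * xi q (y j - y i)) := by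
  obtain ⟨d, rfl⟩ : ∃ d, j = k + d + 1 := ⟨j - k - 1, by omega⟩
  clear hkj
  induction d generalizing k with
  | zero =>
    simp only [Nat.add_zero]
    have hx := hy k (k+1) hk (by omega) (by omega) (by omega) (by omega)
    rw [Phi, if_neg (by omega), Psi, if_neg (by omega)]
    have hE : Finset.Ioo k (k+1) = ∅ := by
      ext x; simp only [Finset.mem_Ioo, Finset.notMem_empty, iff_false]; omega
    rw [hE, Finset.prod_empty, mul_one, show k+1-k = 1 from by omega, pow_one]
    have h0 : q ^ (y (k+1) - y k) - 1 ≠ 0 := sub_ne_zero.mpr (rpow_ne_one' hq hq1 hx.1)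
    have h2 : q ^ (y (k+1) - y k + 2) - 1 ≠ 0 :=
      sub_ne_zero.mpr (rpow_ne_one' hq hq1 (by intro h; exact hx.2 (by linarith)))
    have h0' : 1 - q ^ (y (k+1) - y k) ≠ 0 := fun h => h0 (by linarith)
    rw [xi]
    field_simp
    ring
  | succ d IH =>
    have hjj : k + (d+1) + 1 = k + 1 + d + 1 := by omega
    rw [hjj] at hj ⊢
    have hIH := IH (k+1) (by omega) hj
    rw [Phi, if_pos (by omega : k + 1 < k+1+d+1), Psi, if_pos (by omega : k + 1 < k+1+d+1)]
    set J := k + 1 + d + 1 with hJdef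
    -- basic nonvanishing facts
    have hq0 : q ≠ 0 := ne_of_gt hq
    have hqq : q - q⁻¹ ≠ 0 := sub_inv_ne_zero' hq hq1
    have hxa := hy k J hk (by omega) (by omega) (by omega) (by omega)
    have hxb := hy (k+1) J (by omega) (by omega) (by omega) (by omega) (by omega)
    have ha0 : q ^ (y J - y k) - 1 ≠ 0 := sub_ne_zero.mpr (rpow_ne_one' hq hq1 hxa.1)
    have ha2 : q ^ (y J - y k + 2) - 1 ≠ 0 :=
      sub_ne_zero.mpr (rpow_ne_one' hq hq1 (by intro h; exact hxa.2 (by linarith)))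
    have hb0 : q ^ (y J - y (k+1)) - 1 ≠ 0 := sub_ne_zero.mpr (rpow_ne_one' hq hq1 hxb.1)
    have hb2 : q ^ (y J - y (k+1) + 2) - 1 ≠ 0 :=
      sub_ne_zero.mpr (rpow_ne_one' hq hq1 (by intro h; exact hxb.2 (by linarith)))
    have hl0 : ((l:ℕ):ℝ) ≠ 0 := Nat.cast_ne_zero.mpr (by omega)
    have hup : (0:ℝ) < q ^ ((l:ℕ):ℝ) := Real.rpow_pos_of_pos hq _
    have hu1 : q ^ ((l:ℕ):ℝ) ≠ 1 := rpow_ne_one' hq hq1 hl0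
    have hL : qint q (l:ℕ) ≠ 0 := by
      rw [qint]
      push_cast
      rw [Real.rpow_neg hq.le]
      exact div_ne_zero (sub_inv_ne_zero' hup hu1) hqq
    have hup1 : (0:ℝ) < q ^ (((l:ℕ):ℝ)+1) := Real.rpow_pos_of_pos hq _
    have hu11 : q ^ (((l:ℕ):ℝ)+1) ≠ 1 := rpow_ne_one' hq hq1 (by positivity)
    have hL1 : qint q ((l:ℤ) + 1) ≠ 0 := by
      rw [qint]
      push_cast
      rw [Real.rpow_neg hq.le]
      exact div_ne_zero (sub_inv_ne_zero' hup1 hu11) hqq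
    have hA : qint q (l:ℕ) * qint q ((l:ℤ)+1) ≠ 0 := mul_ne_zero hL hL1
    have hT : (qint q (l:ℕ) * qint q ((l:ℤ)+1)) ^ (J - (k+1)) ≠ 0 := pow_ne_zero _ hA
    have hqb1 : q ^ (y J - y (k+1) + 1) ≠ 0 := (Real.rpow_pos_of_pos hq _).ne'
    -- split the product and the power
    have hins : Finset.Ioo k J = insert (k+1) (Finset.Ioo (k+1) J) := by
      ext x; simp only [Finset.mem_Ioo, Finset.mem_insert]; omega
    rw [hins, Finset.prod_insert (by simp), show J - k = (J - (k+1)) + 1 from by omega, pow_succ]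
    set P := ∏ i ∈ Finset.Ioo (k+1) J, (1 - qint q ↑l * qint q (↑l + 1) * xi q (y J - y i)) with hPdef
    apply mul_right_cancel₀ hqb1
    have key : (-(qint q ↑l * qint q (↑l + 1)) * xi q (y J - y (k+1)) * P) *
        (ql⁻¹ * (q ^ (y J - y (k+1) + 2) - q ^ (-(2 * ((l:ℕ):ℝ)))) / (q ^ (y J - y k + 2) - 1) *
          (q ^ (-((l:ℕ):ℝ)) * (qint q ↑l)⁻¹ * (q ^ (y J - y (k+1)) - q ^ (2 * ((l:ℕ):ℝ))) /
            (q ^ (y J - y k) - 1)) *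
          q ^ (y J - y k + 1) * (qint q ↑l * qint q (↑l + 1))) =
        -(qint q ↑l * qint q (↑l + 1)) * xi q (y J - y k) *
          ((1 - qint q ↑l * qint q (↑l + 1) * xi q (y J - y (k+1))) * P) *
          q ^ (y J - y (k+1) + 1) := by
      have e20 : q ^ (2:ℝ) = q * q := by
        rw [show (2:ℝ) = ((2:ℕ):ℝ) by norm_num, Real.rpow_natCast]; ring
      have e1 : ∀ x:ℝ, q ^ (x+1) = q ^ x * q := fun x => by
        rw [Real.rpow_add hq, Real.rpow_one]
      have e2 : ∀ x:ℝ, q ^ (x+2) = q ^ x * (q * q) := fun x => by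
        rw [Real.rpow_add hq, e20]
      have en : ∀ x:ℝ, q ^ (-x) = (q ^ x)⁻¹ := fun x => Real.rpow_neg hq.le x
      have e2l : q ^ (2 * ((l:ℕ):ℝ)) = q ^ ((l:ℕ):ℝ) * q ^ ((l:ℕ):ℝ) := by
        rw [two_mul, Real.rpow_add hq]
      have hune : q ^ ((l:ℕ):ℝ) ≠ 0 := hup.ne'
      have hbne : q ^ (y J - y (k+1)) ≠ 0 := (Real.rpow_pos_of_pos hq _).ne'
      have hane : q ^ (y J - y k) ≠ 0 := (Real.rpow_pos_of_pos hq _).ne'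
      have hqm1 : q * q - 1 ≠ 0 := sq_sub_one_ne_zero' hq hq1
      have hum1 : q ^ ((l:ℕ):ℝ) * q ^ ((l:ℕ):ℝ) - 1 ≠ 0 := by
        rw [← e2l]
        exact sub_ne_zero.mpr (rpow_ne_one' hq hq1 (by positivity))
      have huq1 : q ^ ((l:ℕ):ℝ) * q ≠ 1 := by rw [← e1]; exact hu11
      have huqpos : (0:ℝ) < q ^ ((l:ℕ):ℝ) * q := by positivity
      have hw : q ^ ((l:ℕ):ℝ) * q - (q ^ ((l:ℕ):ℝ) * q)⁻¹ ≠ 0 := sub_inv_ne_zero' huqpos huq1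
      have hw2 : q ^ ((l:ℕ):ℝ) * q * (q ^ ((l:ℕ):ℝ) * q) - 1 ≠ 0 := sq_sub_one_ne_zero' huqpos huq1
      have hv : q ^ ((l:ℕ):ℝ) - (q ^ ((l:ℕ):ℝ))⁻¹ ≠ 0 := sub_inv_ne_zero' hup hu1
      rw [e2] at ha2 hb2
      simp only [xi, qint, hql]
      push_cast
      simp only [en, e2l, e2, e1]
      linear_combination key_identity q (q ^ ((l:ℕ):ℝ)) (q ^ (y J - y k)) (q ^ (y J - y (k+1))) P
        hq0 hune hane hbne hqq hv hw ha0 ha2 hb0 hb2 hqm1 hum1 hw2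
    linear_combination
      (ql⁻¹ * (q ^ (y J - y (k+1) + 2) - q ^ (-(2 * ((l:ℕ):ℝ)))) / (q ^ (y J - y k + 2) - 1) *
        (q ^ (-((l:ℕ):ℝ)) * (qint q ↑l)⁻¹ * (q ^ (y J - y (k+1)) - q ^ (2 * ((l:ℕ):ℝ))) /
          (q ^ (y J - y k) - 1)) *
        q ^ (y J - y k + 1) * (qint q ↑l * qint q (↑l + 1))) * hIH + key
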